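/- arXiv:1608.01969 — 5 statements merged into one kernel-verified Lean document; each statement's English description precedes it below -/
import Mathlib

section
/- Let α be a Pisot–Vijayaraghavan number and let ξ be a real number with ξ ∉ ℚ(α). Then the sequence ({ξαⁿ})_{n∈ℕ} of fractional parts has infinitely many limit points. -/
/-- A Pisot–Vijayaraghavan number: a real algebraic integer greater than 1 all of
whose other conjugates lie in the open unit disc. -/
def IsPisot (α : ℝ) : Prop :=
  1 < α ∧ IsIntegral ℤ α ∧
    ∀ z : ℂ, (Polynomial.aeval z) (minpoly ℤ α) = 0 → z ≠ (α : ℂ) → ‖z‖ < 1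

/-!
Suppose `Int.fract (ξ * α ^ n)` has only finitely many limit points, and let `P` be the minimal
polynomial of `α` over `ℤ`, acting on sequences through the shift. On the circle `ℝ/ℤ` the points
`yₙ = ξ αⁿ` satisfy `P(S) y = 0` and approach the finite set of their limit points; the nearest
limit points `cₙ` make `P(S) c` a sequence with finitely many values tending to `0`, hence
eventually `0`, and a monic recurrence on a finite set is eventually periodic. Lifting to `ℝ`
gives `ξ αⁿ = mₙ + wₙ` with `mₙ ∈ ℤ`, `w` bounded and `P(S) m` eventually periodic.
Summing `P(S) w = -P(S) m` against `α⁻ⁿ`, the unknown series `∑ wₙ α⁻ⁿ` drops out because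
`P(α) = 0`, and what is left expresses `ξ · α P'(α)` through elements of `ℚ(α)`, including the
geometric series of an eventually periodic integer sequence. Since `P'(α) ≠ 0`, `ξ ∈ ℚ(α)`.
-/

open Filter Topology Set Polynomial Finset

def EventuallyPeriodic {X : Type*} (u : ℕ → X) : Prop :=
  ∃ p > 0, ∀ᶠ n in atTop, u (n + p) = u n

namespace EventuallyPeriodic

variable {X Y : Type*}

theorem comp {u : ℕ → X} (hu : EventuallyPeriodic u) (f : X → Y) :
    EventuallyPeriodic (f ∘ u) := by
  obtain ⟨p, hp, h⟩ := hu
  exact ⟨p, hp, h.mono fun n hn => by simp only [Function.comp_apply, hn]⟩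

theorem of_finite_range_of_next {s : ℕ → X} (hs : (range s).Finite)
    (h : ∃ N, ∀ m n, N ≤ m → N ≤ n → s m = s n → s (m + 1) = s (n + 1)) :
    EventuallyPeriodic s := by
  obtain ⟨N, hN⟩ := h
  obtain ⟨a, b, hab, hsab⟩ :=
    hs.exists_lt_map_eq_of_forall_mem (f := fun k => s (N + k)) fun k => mem_range_self _
  have hshift : ∀ k, s (N + a + k) = s (N + b + k) := by
    intro k
    induction k with
    | zero => exact hsab
    | succ k ih => exact hN (N + a + k) (N + b + k) (by omega) (by omega) ih
  refine ⟨b - a, by omega, eventually_atTop.2 ⟨N + a, fun n hn => ?_⟩⟩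
  obtain ⟨k, rfl⟩ := Nat.exists_eq_add_of_le hn
  rw [hshift k]
  congr 1
  omega

theorem of_finite_range_of_window {c : ℕ → X} (hc : (range c).Finite) {d : ℕ} (hd : 0 < d)
    (h : ∃ N, ∀ m n, N ≤ m → N ≤ n → (∀ i < d, c (m + i) = c (n + i)) → c (m + d) = c (n + d)) :
    EventuallyPeriodic c := by
  obtain ⟨N, hN⟩ := h
  set s : ℕ → Fin d → X := fun n i => c (n + i)
  have hs : (range s).Finite :=
    (Set.Finite.pi fun _ => hc).subset <| range_subset_iff.2 fun n i _ => mem_range_self _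
  have hnext : ∀ m n, N ≤ m → N ≤ n → s m = s n → s (m + 1) = s (n + 1) := by
    intro m n hm hn hmn
    funext i
    by_cases hi : (i : ℕ) + 1 < d
    · simpa only [s, add_assoc, add_comm 1] using congrFun hmn ⟨i + 1, hi⟩
    · have hid : (i : ℕ) + 1 = d := by omega
      simp only [s, add_assoc, add_comm 1, hid]
      exact hN m n hm hn fun j hj => congrFun hmn ⟨j, hj⟩
  obtain ⟨p, hp, hper⟩ := of_finite_range_of_next hs ⟨N, hnext⟩
  exact ⟨p, hp, hper.mono fun n hn => by simpa [s] using congrFun hn ⟨0, hd⟩⟩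

theorem of_tendsto_intCast_sub {σ : ℕ → ℤ} {t : ℕ → ℝ} (ht : EventuallyPeriodic t)
    (h : Tendsto (fun n => (σ n : ℝ) - t n) atTop (𝓝 0)) : EventuallyPeriodic σ := by
  obtain ⟨p, hp, hper⟩ := ht
  have hdiff : Tendsto (fun n => (σ (n + p) : ℝ) - σ n) atTop (𝓝 0) := by
    have := (h.comp (tendsto_add_atTop_nat p)).sub h
    rw [sub_zero] at this
    refine this.congr' (hper.mono fun n hn => ?_)
    simp only [Function.comp_apply, hn]
    ring
  refine ⟨p, hp, (hdiff.eventually (Metric.ball_mem_nhds 0 one_pos)).mono fun n hn => ?_⟩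
  rw [Real.dist_eq, sub_zero, ← Int.cast_sub, ← Int.cast_abs, ← Int.cast_one, Int.cast_lt,
    Int.abs_lt_one_iff, sub_eq_zero] at hn
  exact hn

end EventuallyPeriodic

theorem Filter.Tendsto.eventually_eq_of_finite_range {X ι : Type*} [TopologicalSpace X] [T1Space X]
    {l : Filter ι} {u : ι → X} {a : X} (hu : (range u).Finite) (h : Tendsto u l (𝓝 a)) :
    ∀ᶠ i in l, u i = a := by
  have hopen : IsOpen (range u \ {a})ᶜ := (hu.sdiff).isClosed.isOpen_compl
  filter_upwards [h (hopen.mem_nhds fun ha => ha.2 rfl)] with i hi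
  by_contra hne
  exact hi ⟨mem_range_self i, hne⟩

theorem exists_tendsto_dist_mapClusterPt {X : Type*} [MetricSpace X] [CompactSpace X]
    (u : ℕ → X) :
    ∃ c : ℕ → X, (∀ n, MapClusterPt (c n) atTop u) ∧
      Tendsto (fun n => dist (u n) (c n)) atTop (𝓝 0) := by
  set C := {x | MapClusterPt x atTop u}
  have hCc : IsCompact C := isClosed_setOfPred_clusterPt.isCompact
  have hCne : C.Nonempty := exists_clusterPt_of_compactSpace _
  choose c hcC hc using fun n => hCc.exists_infDist_eq_dist hCne (u n)
  refine ⟨c, hcC, ?_⟩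
  have hlim : Tendsto u atTop (𝓝ˢ C) :=
    isCompact_univ.tendsto_nhdsSet_of_mapClusterPt (Eventually.of_forall fun _ => trivial)
      fun _ _ hx => hx
  rw [Metric.tendsto_nhds]
  intro ε hε
  filter_upwards [hlim (Metric.thickening_mem_nhdsSet C hε)] with n hn
  rw [Set.mem_preimage, Metric.mem_thickening_iff_infDist_lt hCne, hc] at hn
  rwa [Real.dist_eq, sub_zero, abs_of_nonneg dist_nonneg]

theorem mapClusterPt_coe_subset_image_fract (v : ℕ → ℝ) :
    {z : UnitAddCircle | MapClusterPt z atTop fun n => (v n : UnitAddCircle)} ⊆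
      (↑) '' {x | MapClusterPt x atTop fun n => Int.fract (v n)} := by
  intro z hz
  set f : Icc (0 : ℝ) 1 → UnitAddCircle := fun r => ((r : ℝ) : UnitAddCircle)
  have hf : IsProperMap f :=
    ((AddCircle.continuous_mk' 1).comp continuous_subtype_val).isProperMap
  set u : ℕ → Icc (0 : ℝ) 1 :=
    fun n => ⟨Int.fract (v n), Int.fract_nonneg _, (Int.fract_lt_one _).le⟩
  have hzu : MapClusterPt z atTop (f ∘ u) := by
    simpa [f, u, Function.comp_def] using hz
  obtain ⟨r, rfl, hr⟩ := hf.clusterPt_of_mapClusterPt (mapClusterPt_comp.1 hzu)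
  exact ⟨r, MapClusterPt.continuousAt_comp continuous_subtype_val.continuousAt hr, rfl⟩

namespace Polynomial

variable {M N : Type*} [AddCommGroup M] [AddCommGroup N]

/-- `P(S)` for the shift `(S u) n = u (n + 1)`. -/
def evalShift (P : ℤ[X]) : (ℕ → M) →+ (ℕ → M) where
  toFun u n := ∑ i ∈ range (P.natDegree + 1), P.coeff i • u (n + i)
  map_zero' := by ext; simp
  map_add' u v := by ext; simp [smul_add, sum_add_distrib]

theorem evalShift_apply (P : ℤ[X]) (u : ℕ → M) (n : ℕ) :
    evalShift P u n = ∑ i ∈ range (P.natDegree + 1), P.coeff i • u (n + i) := rfl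

theorem evalShift_comp (P : ℤ[X]) (f : M →+ N) (u : ℕ → M) :
    evalShift P (f ∘ u) = f ∘ evalShift P u := by
  ext n
  simp [evalShift_apply, map_sum, map_zsmul]

theorem Monic.evalShift_apply {P : ℤ[X]} (hP : P.Monic) (u : ℕ → M) (n : ℕ) :
    evalShift P u n = u (n + P.natDegree) + ∑ i ∈ range P.natDegree, P.coeff i • u (n + i) := by
  rw [Polynomial.evalShift_apply, sum_range_succ, hP.coeff_natDegree, one_smul, add_comm]

theorem evalShift_const_mul_pow_eq_zero {R : Type*} [CommRing R] {P : ℤ[X]} {α : R}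
    (hP : aeval α P = 0) (ξ : R) : evalShift P (fun k => ξ * α ^ k) = 0 := by
  ext n
  have h : evalShift P (fun k => ξ * α ^ k) n = ξ * α ^ n * aeval α P := by
    simp only [evalShift_apply, aeval_eq_sum_range, mul_sum, zsmul_eq_mul, pow_add]
    exact sum_congr rfl fun i _ => by ring
  rw [h, hP, mul_zero, Pi.zero_apply]

theorem _root_.EventuallyPeriodic.evalShift {u : ℕ → M} (hu : EventuallyPeriodic u) (P : ℤ[X]) :
    EventuallyPeriodic (evalShift P u) := by
  obtain ⟨p, hp, h⟩ := hu
  obtain ⟨N, hN⟩ := eventually_atTop.1 h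
  refine ⟨p, hp, eventually_atTop.2 ⟨N, fun n hn => ?_⟩⟩
  simp only [evalShift_apply, add_right_comm n p]
  exact sum_congr rfl fun i _ => by rw [hN (n + i) (by omega)]

theorem finite_range_evalShift (P : ℤ[X]) {u : ℕ → M} (hu : (range u).Finite) :
    (range (evalShift P u)).Finite := by
  have := hu.to_subtype
  refine (Set.finite_range fun v : Fin (P.natDegree + 1) → range u =>
    ∑ i : Fin (P.natDegree + 1), P.coeff i • (v i : M)).subset ?_
  rintro _ ⟨n, rfl⟩
  exact ⟨fun i => ⟨u (n + i), mem_range_self _⟩,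
    (Fin.sum_univ_eq_sum_range (fun i => P.coeff i • u (n + i)) _)⟩

theorem tendsto_evalShift_zero [TopologicalSpace M] [IsTopologicalAddGroup M] (P : ℤ[X])
    {u : ℕ → M} (hu : Tendsto u atTop (𝓝 0)) : Tendsto (evalShift P u) atTop (𝓝 0) := by
  have h := tendsto_finsetSum (range (P.natDegree + 1))
    fun i _ => (hu.comp (tendsto_add_atTop_nat i)).const_smul (P.coeff i)
  simp only [smul_zero, sum_const_zero] at h
  exact h.congr fun n => (evalShift_apply P u n).symm

end Polynomial

theorem summable_mul_pow_of_bounded {g : ℕ → ℝ} {B x : ℝ} (hg : ∀ n, |g n| ≤ B) (hx : |x| < 1) :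
    Summable fun n => g n * x ^ n :=
  Summable.of_norm_bounded ((summable_geometric_of_abs_lt_one hx).abs.mul_left B) fun n => by
    rw [Real.norm_eq_abs, abs_mul, abs_pow]
    exact mul_le_mul_of_nonneg_right (hg n) (by positivity)

theorem tsum_shift_mul_pow {g : ℕ → ℝ} {x : ℝ} (hg : Summable fun n => g n * x ^ n) (i : ℕ) :
    x ^ i * ∑' n, g (n + i) * x ^ n = ∑' n, g n * x ^ n - ∑ k ∈ range i, g k * x ^ k := by
  rw [← hg.sum_add_tsum_nat_add i, add_sub_cancel_left, ← tsum_mul_left]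
  exact tsum_congr fun n => by ring

theorem tsum_evalShift_mul_inv_pow (P : ℤ[X]) {g : ℕ → ℝ} {α : ℝ} (hα : α ≠ 0)
    (hg : Summable fun n => g n * α⁻¹ ^ n) :
    ∑' n, evalShift P g n * α⁻¹ ^ n = aeval α P * ∑' n, g n * α⁻¹ ^ n -
      ∑ i ∈ range (P.natDegree + 1), P.coeff i * α ^ i * ∑ k ∈ range i, g k * α⁻¹ ^ k := by
  have hαi : ∀ i, α ^ i * α⁻¹ ^ i = 1 := fun i => by
    rw [← mul_pow, mul_inv_cancel₀ hα, one_pow]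
  have hshift : ∀ i, Summable fun n => g (n + i) * α⁻¹ ^ n := fun i => by
    refine (((summable_nat_add_iff i).2 hg).mul_left (α ^ i)).congr fun n => ?_
    rw [pow_add]
    linear_combination (g (n + i) * α⁻¹ ^ n) * hαi i
  have hterm : ∀ i, ∑' n, (P.coeff i : ℝ) * g (n + i) * α⁻¹ ^ n =
      P.coeff i * α ^ i * (∑' n, g n * α⁻¹ ^ n - ∑ k ∈ range i, g k * α⁻¹ ^ k) := by
    intro i
    rw [← tsum_shift_mul_pow hg i, ← tsum_mul_left, ← tsum_mul_left]
    exact tsum_congr fun n => by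
      linear_combination (-(P.coeff i : ℝ) * g (n + i) * α⁻¹ ^ n) * hαi i
  simp only [evalShift_apply, zsmul_eq_mul, sum_mul]
  rw [Summable.tsum_finsetSum fun i _ => by simpa only [mul_assoc] using (hshift i).mul_left _]
  rw [sum_congr rfl fun i _ => hterm i, aeval_eq_sum_range, sum_mul, ← sum_sub_distrib]
  exact sum_congr rfl fun i _ => by rw [zsmul_eq_mul]; ring

theorem Function.Periodic.summable_mul_pow {t : ℕ → ℝ} {p : ℕ} (ht : Function.Periodic t p)
    (hp : 0 < p) {x : ℝ} (hx : |x| < 1) : Summable fun n => t n * x ^ n := by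
  refine summable_mul_pow_of_bounded (B := ∑ k ∈ range p, |t k|) (fun n => ?_) hx
  rw [← ht.map_mod_nat n]
  exact single_le_sum (fun k _ => abs_nonneg (t k)) (mem_range.2 (Nat.mod_lt n hp))

theorem Function.Periodic.tsum_mul_pow {t : ℕ → ℝ} {p : ℕ} (ht : Function.Periodic t p)
    (hp : 0 < p) {x : ℝ} (hx : |x| < 1) :
    ∑' n, t n * x ^ n = (∑ n ∈ range p, t n * x ^ n) / (1 - x ^ p) := by
  have hxp : x ^ p < 1 := (le_abs_self _).trans_lt <| by
    rw [abs_pow]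
    exact pow_lt_one₀ (abs_nonneg x) hx hp.ne'
  have hshift := tsum_shift_mul_pow (ht.summable_mul_pow hp hx) p
  simp only [ht _] at hshift
  rw [eq_div_iff (by linarith)]
  linear_combination -hshift

theorem tsum_mul_pow_mem_of_eventuallyPeriodic {K : Subfield ℝ} {x : ℝ} (hxK : x ∈ K)
    (hx : |x| < 1) {g : ℕ → ℝ} (hgK : ∀ n, g n ∈ K) (hg : EventuallyPeriodic g) :
    ∑' n, g n * x ^ n ∈ K := by
  obtain ⟨p, hp, hper⟩ := hg
  obtain ⟨N, hN⟩ := eventually_atTop.1 hper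
  have ht : Function.Periodic (fun n => g (n + N)) p := fun n => by
    simp only [add_right_comm n p N]
    exact hN _ (by omega)
  have htail : ∀ n, g (n + N) * x ^ (n + N) = x ^ N * (g (n + N) * x ^ n) := fun n => by ring
  have hs : Summable fun n => g n * x ^ n :=
    (summable_nat_add_iff N).1 <| by simpa only [htail] using (ht.summable_mul_pow hp hx).mul_left _
  rw [← hs.sum_add_tsum_nat_add N, tsum_congr htail, tsum_mul_left, ht.tsum_mul_pow hp hx]
  have hmem : ∀ k n, g k * x ^ n ∈ K := fun k n => mul_mem (hgK k) (pow_mem hxK n)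
  exact add_mem (sum_mem fun n _ => hmem n n) <| mul_mem (pow_mem hxK N) <|
    div_mem (sum_mem fun n _ => hmem _ n) (sub_mem (one_mem K) (pow_mem hxK p))

theorem sum_range_natCast_mul_coeff_mul_pow {R : Type*} [CommRing R] (P : ℤ[X]) (α : R) :
    ∑ i ∈ range (P.natDegree + 1), (i : R) * P.coeff i * α ^ i = α * aeval α (derivative P) := by
  rw [aeval_eq_sum_range' (n := P.natDegree + 1) ((natDegree_derivative_le P).trans_lt (by omega)),
    mul_sum, sum_range_succ', sum_range_succ]
  simp only [Nat.cast_zero, zero_mul, add_zero, coeff_derivative, zsmul_eq_mul, Int.cast_mul,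
    Int.cast_add, Int.cast_natCast, Int.cast_one, coeff_natDegree_succ_eq_zero, zero_smul,
    Nat.cast_add, Nat.cast_one, mul_zero]
  exact sum_congr rfl fun i _ => by ring

theorem aeval_derivative_minpoly_int_ne_zero {L : Type*} [Field L] [CharZero L] {α : L}
    (h : IsIntegral ℤ α) : aeval α (derivative (minpoly ℤ α)) ≠ 0 := by
  have hsep : (minpoly ℚ α).Separable := (minpoly.irreducible h.tower_top).separable
  have := hsep.aeval_derivative_ne_zero (minpoly.aeval ℚ α)
  rwa [minpoly.isIntegrallyClosed_eq_field_fractions' ℚ h, derivative_map,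
    aeval_map_algebraMap] at this

theorem mem_of_eventuallyPeriodic_evalShift_minpoly {K : Subfield ℝ} {α ξ : ℝ} (hα : 1 < α)
    (hαK : α ∈ K) (hint : IsIntegral ℤ α) {m : ℕ → ℤ} (hbdd : ∃ B, ∀ n, |ξ * α ^ n - m n| ≤ B)
    (hper : EventuallyPeriodic (evalShift (minpoly ℤ α) m)) : ξ ∈ K := by
  set P := minpoly ℤ α
  obtain ⟨B, hB⟩ := hbdd
  have hα0 : α ≠ 0 := by positivity
  have hx : |α⁻¹| < 1 := by
    rw [abs_inv, abs_of_pos (by positivity)]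
    exact inv_lt_one_of_one_lt₀ hα
  set w : ℕ → ℝ := fun n => ξ * α ^ n - m n
  set τ : ℕ → ℝ := fun n => ((evalShift P m n : ℤ) : ℝ)
  have hτ : evalShift P w = -τ := by
    have hm := evalShift_comp P (Int.castAddHom ℝ) m
    have hw : w = (fun n => ξ * α ^ n) - Int.castAddHom ℝ ∘ m := rfl
    ext n
    rw [hw, map_sub, hm, evalShift_const_mul_pow_eq_zero (minpoly.aeval ℤ α)]
    simp [τ]
  have key := tsum_evalShift_mul_inv_pow P hα0 (summable_mul_pow_of_bounded hB hx)
  -- `P(α) = 0` removes the unknown series `∑ wₙ α⁻ⁿ`.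
  rw [hτ, minpoly.aeval, zero_mul, zero_sub] at key
  have hpartial : ∀ i, ∑ k ∈ range i, (ξ * α ^ k - m k) * α⁻¹ ^ k =
      i * ξ - ∑ k ∈ range i, m k * α⁻¹ ^ k := by
    intro i
    simp only [sub_mul, sum_sub_distrib, mul_assoc, ← mul_pow, mul_inv_cancel₀ hα0, one_pow,
      mul_one, sum_const, card_range, nsmul_eq_mul]
  have hξ : ξ * (α * aeval α (derivative P)) =
      ∑ i ∈ range (P.natDegree + 1), P.coeff i * α ^ i * ∑ k ∈ range i, m k * α⁻¹ ^ k +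
        ∑' n, τ n * α⁻¹ ^ n := by
    simp only [hpartial, Pi.neg_apply, neg_mul, tsum_neg, neg_inj] at key
    rw [← sum_range_natCast_mul_coeff_mul_pow, mul_sum, key, ← sum_add_distrib]
    exact sum_congr rfl fun i _ => by ring
  rw [← eq_div_iff (mul_ne_zero hα0 (aeval_derivative_minpoly_int_ne_zero hint))] at hξ
  have hxK : α⁻¹ ∈ K := inv_mem hαK
  have hτK : ∑' n, τ n * α⁻¹ ^ n ∈ K :=
    tsum_mul_pow_mem_of_eventuallyPeriodic hxK hx (fun n => intCast_mem K _) (hper.comp _)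
  have hP'K : aeval α (derivative P) ∈ K := by
    rw [aeval_eq_sum_range]
    exact sum_mem fun i _ => zsmul_mem (pow_mem hαK i) _
  rw [hξ]
  refine div_mem (add_mem (sum_mem fun i _ => ?_) hτK) (mul_mem hαK hP'K)
  exact mul_mem (mul_mem (intCast_mem K _) (pow_mem hαK i))
    (sum_mem fun k _ => mul_mem (intCast_mem K _) (pow_mem hxK k))

theorem exists_eventuallyPeriodic_tendsto_sub {G : Type*} [NormedAddCommGroup G] [CompactSpace G]
    {P : ℤ[X]} (hP : P.Monic) (hdeg : 0 < P.natDegree) {y : ℕ → G} (hy : evalShift P y = 0)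
    (hC : {z | MapClusterPt z atTop y}.Finite) :
    ∃ c : ℕ → G, EventuallyPeriodic c ∧ Tendsto (fun n => y n - c n) atTop (𝓝 0) := by
  obtain ⟨c, hcC, hc⟩ := exists_tendsto_dist_mapClusterPt y
  have hyc : Tendsto (y - c) atTop (𝓝 0) := by
    rw [tendsto_zero_iff_norm_tendsto_zero]
    exact hc.congr fun n => dist_eq_norm _ _
  have hrange : (range c).Finite := hC.subset (range_subset_iff.2 hcC)
  have hPc : ∀ᶠ n in atTop, evalShift P c n = 0 := by
    have := (tendsto_evalShift_zero P hyc).neg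
    simp only [map_sub, hy, zero_sub, Pi.neg_apply, neg_neg, neg_zero] at this
    exact this.eventually_eq_of_finite_range (finite_range_evalShift P hrange)
  obtain ⟨N, hN⟩ := eventually_atTop.1 hPc
  refine ⟨c, EventuallyPeriodic.of_finite_range_of_window hrange hdeg
    ⟨N, fun m n hm hn hmn => ?_⟩, hyc⟩
  have hcm := hP.evalShift_apply c m
  have hcn := hP.evalShift_apply c n
  rw [hN m hm, sum_congr rfl fun i hi => by rw [hmn i (mem_range.1 hi)]] at hcm
  rw [hN n hn] at hcn
  exact add_right_cancel (hcm.symm.trans hcn)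

theorem exists_int_seq_of_tendsto_sub (P : ℤ[X]) {v : ℕ → ℝ} (hv : evalShift P v = 0)
    {c : ℕ → UnitAddCircle} (hc : EventuallyPeriodic c)
    (hvc : Tendsto (fun n => (v n : UnitAddCircle) - c n) atTop (𝓝 0)) :
    ∃ m : ℕ → ℤ, (∃ B, ∀ n, |v n - m n| ≤ B) ∧ EventuallyPeriodic (evalShift P m) := by
  choose γ hγI hγ using fun z : UnitAddCircle => AddCircle.eq_coe_Ico z
  set r : ℕ → ℝ := fun n => v n - γ (c n)
  set E : ℕ → ℝ := fun n => r n - round (r n)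
  have hE : Tendsto E atTop (𝓝 0) := by
    rw [tendsto_zero_iff_abs_tendsto_zero]
    refine (tendsto_zero_iff_norm_tendsto_zero.1 hvc).congr fun n => ?_
    rw [← hγ (c n), ← AddCircle.coe_sub, UnitAddCircle.norm_eq]
    rfl
  refine ⟨fun n => round (r n), ⟨1 + 1 / 2, fun n => ?_⟩, ?_⟩
  · calc |v n - round (r n)| = |γ (c n) + E n| := by congr 1; simp only [E, r]; ring
      _ ≤ |γ (c n)| + |E n| := abs_add_le _ _
      _ ≤ 1 + 1 / 2 := add_le_add (abs_le.2 ⟨by linarith [(hγI (c n)).1], (hγI (c n)).2.le⟩)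
          (abs_sub_round _)
  refine EventuallyPeriodic.of_tendsto_intCast_sub ((hc.comp fun z => -γ z).evalShift P) ?_
  have hm : Int.castAddHom ℝ ∘ (fun n => round (r n)) = v + (fun z => -γ z) ∘ c - E := by
    ext n
    simp only [Function.comp_apply, Int.coe_castAddHom, Pi.add_apply, Pi.sub_apply, E]
    ring
  have := (tendsto_evalShift_zero P hE).neg
  rw [neg_zero] at this
  refine this.congr fun n => ?_
  have h := congrFun (evalShift_comp P (Int.castAddHom ℝ) fun n => round (r n)) n
  rw [hm, map_sub, map_add, hv] at h
  simp only [Function.comp_apply, Int.coe_castAddHom, Pi.add_apply, Pi.sub_apply,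
    Pi.zero_apply] at h
  linear_combination h

theorem stmt_5 (α ξ : ℝ) (hα : IsPisot α)
    (hξ : ξ ∉ IntermediateField.adjoin ℚ ({α} : Set ℝ)) :
    {x : ℝ | MapClusterPt x Filter.atTop (fun n : ℕ => Int.fract (ξ * α ^ n))}.Infinite := by
  obtain ⟨hα1, hint, -⟩ := hα
  by_contra hfin
  rw [Set.not_infinite] at hfin
  set P := minpoly ℤ α
  set v : ℕ → ℝ := fun n => ξ * α ^ n
  have hv : evalShift P v = 0 := evalShift_const_mul_pow_eq_zero (minpoly.aeval ℤ α) ξ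
  have hy : evalShift P (fun n => (v n : UnitAddCircle)) = 0 := by
    refine (evalShift_comp P (QuotientAddGroup.mk' _) v).trans ?_
    rw [hv]
    rfl
  obtain ⟨c, hc, hvc⟩ := exists_eventuallyPeriodic_tendsto_sub (minpoly.monic hint)
    (minpoly.natDegree_pos hint) hy
    ((hfin.image _).subset (mapClusterPt_coe_subset_image_fract v))
  obtain ⟨m, hbdd, hper⟩ := exists_int_seq_of_tendsto_sub P hv hc hvc
  exact hξ (mem_of_eventuallyPeriodic_evalShift_minpoly hα1
    (IntermediateField.mem_adjoin_simple_self ℚ α) hint hbdd hper)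
end

section
/- Let p, q be integers with p ≥ q ≥ 1 and define F by F_0 = 0, F_1 = 1, F_{n+2} = p·F_{n+1} + q·F_n. Let (A_n), (f_n), (g_n) be sequences of complex numbers satisfying the recursion A_{n+1} = f_n·A_n + g_{n−1}·A_{n−1} for all n ≥ 1, with |f_n| ≤ p and |g_n| ≤ q for all n. Then for all n and all r with 1 ≤ r ≤ n one has |A_{n+1}| ≤ F_{r+1}·|A_{n−r+1}| + q·F_r·|A_{n−r}|. -/
/-! Each step of the recursion gives `‖A (m + 2)‖ ≤ p ‖A (m + 1)‖ + q ‖A m‖`. Unrolling this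
inequality `r` times from the bottom, the coefficients of the two lowest terms obey the
recursion of `F`, which is the claim. -/

section TwoStepRecurrence

variable {R : Type*} [CommSemiring R] [PartialOrder R] [IsOrderedRing R]

lemma nonneg_of_two_step_recurrence {p q : R} (hp : 0 ≤ p) (hq : 0 ≤ q) {F : ℕ → R}
    (hF0 : 0 ≤ F 0) (hF1 : 0 ≤ F 1) (hFrec : ∀ n, F (n + 2) = p * F (n + 1) + q * F n) :
    ∀ n, 0 ≤ F n := by
  have h : ∀ n, 0 ≤ F n ∧ 0 ≤ F (n + 1) := by
    intro n
    induction n with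
    | zero => exact ⟨hF0, hF1⟩
    | succ n ih =>
      refine ⟨ih.2, ?_⟩
      rw [hFrec]
      exact add_nonneg (mul_nonneg hp ih.2) (mul_nonneg hq ih.1)
  exact fun n => (h n).1

lemma le_recurrence_mul_add_of_two_step_le {p q : R} (hp : 0 ≤ p) (hq : 0 ≤ q) {F : ℕ → R}
    (hF0 : F 0 = 0) (hF1 : F 1 = 1) (hFrec : ∀ n, F (n + 2) = p * F (n + 1) + q * F n)
    {a : ℕ → R} (ha : ∀ m, a (m + 2) ≤ p * a (m + 1) + q * a m) :
    ∀ r m, a (m + r + 1) ≤ F (r + 1) * a (m + 1) + q * F r * a m := by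
  have hFnonneg := nonneg_of_two_step_recurrence hp hq (hF0 ▸ le_rfl) (hF1 ▸ zero_le_one) hFrec
  intro r
  induction r with
  | zero => intro m; simp [hF0, hF1]
  | succ r ih =>
    intro m
    calc a (m + (r + 1) + 1)
        = a (m + 1 + r + 1) := by rw [Nat.add_right_comm m 1 r, Nat.add_assoc m r 1]
      _ ≤ F (r + 1) * a (m + 2) + q * F r * a (m + 1) := ih (m + 1)
      _ ≤ F (r + 1) * (p * a (m + 1) + q * a m) + q * F r * a (m + 1) := by
          gcongr
          · exact hFnonneg _
          · exact ha m
      _ = (p * F (r + 1) + q * F r) * a (m + 1) + q * F (r + 1) * a m := by ring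
      _ = F (r + 1 + 1) * a (m + 1) + q * F (r + 1) * a m := by rw [hFrec]

end TwoStepRecurrence

theorem stmt_8_general (p q : ℤ)
    (F : ℕ → ℤ) (hF0 : F 0 = 0) (hF1 : F 1 = 1)
    (hFrec : ∀ n : ℕ, F (n + 2) = p * F (n + 1) + q * F n)
    (A f g : ℕ → ℂ)
    (hA : ∀ n : ℕ, 1 ≤ n → A (n + 1) = f n * A n + g (n - 1) * A (n - 1))
    (hf : ∀ n : ℕ, ‖f n‖ ≤ (p : ℝ))
    (hg : ∀ n : ℕ, ‖g n‖ ≤ (q : ℝ)) :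
    ∀ n r : ℕ, 1 ≤ r → r ≤ n →
      ‖A (n + 1)‖ ≤
        (F (r + 1) : ℝ) * ‖A (n - r + 1)‖ +
          (q : ℝ) * (F r : ℝ) * ‖A (n - r)‖ := by
  intro n r _ hrn
  have hp : (0 : ℝ) ≤ p := (norm_nonneg (f 0)).trans (hf 0)
  have hq : (0 : ℝ) ≤ q := (norm_nonneg (g 0)).trans (hg 0)
  have hstep : ∀ m, ‖A (m + 2)‖ ≤ p * ‖A (m + 1)‖ + q * ‖A m‖ := by
    intro m
    rw [hA (m + 1) m.succ_pos, Nat.add_sub_cancel]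
    calc ‖f (m + 1) * A (m + 1) + g m * A m‖
        ≤ ‖f (m + 1)‖ * ‖A (m + 1)‖ + ‖g m‖ * ‖A m‖ := by
          simpa only [norm_mul] using norm_add_le (f (m + 1) * A (m + 1)) (g m * A m)
      _ ≤ p * ‖A (m + 1)‖ + q * ‖A m‖ := by gcongr <;> simp only [hf, hg]
  have hFrecℝ : ∀ n, (F (n + 2) : ℝ) = p * F (n + 1) + q * F n := fun n => by
    exact_mod_cast hFrec n
  have := le_recurrence_mul_add_of_two_step_le hp hq (F := fun n => (F n : ℝ))
    (a := fun n => ‖A n‖)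
    (by simp [hF0]) (by simp [hF1]) hFrecℝ hstep r (n - r)
  rwa [Nat.sub_add_cancel hrn] at this

theorem stmt_8 (p q : ℤ) (hq : 1 ≤ q) (hpq : q ≤ p)
    (F : ℕ → ℤ) (hF0 : F 0 = 0) (hF1 : F 1 = 1)
    (hFrec : ∀ n : ℕ, F (n + 2) = p * F (n + 1) + q * F n)
    (A f g : ℕ → ℂ)
    (hA : ∀ n : ℕ, 1 ≤ n → A (n + 1) = f n * A n + g (n - 1) * A (n - 1))
    (hf : ∀ n : ℕ, ‖f n‖ ≤ (p : ℝ))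
    (hg : ∀ n : ℕ, ‖g n‖ ≤ (q : ℝ)) :
    ∀ n r : ℕ, 1 ≤ r → r ≤ n →
      ‖A (n + 1)‖ ≤
        (F (r + 1) : ℝ) * ‖A (n - r + 1)‖ +
          (q : ℝ) * (F r : ℝ) * ‖A (n - r)‖ :=
  stmt_8_general p q F hF0 hF1 hFrec A f g hA hf hg
end

section
/- Let p, q be integers with p ≥ q ≥ 1 and θ = (p + √(p² + 4q))/2. Let (A_n), (f_n), (g_n) be sequences of complex numbers satisfying A_{n+1} = f_n·A_n + g_{n−1}·A_{n−1} for all n ≥ 1, with |f_n| ≤ p and |g_n| ≤ q for all n. Suppose there exist δ' ∈ (0,1) and r ∈ ℕ such that for every sufficiently large n there is at least one j ∈ {n−r, …, n} with |f_j| ≤ p − δ'. Then |A_n|²/θ^{2n} → 0 as n → ∞. -/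
/-!
With `t = θ⁻¹` one has `p t + q t² = 1`, so `aₙ = ‖Aₙ‖ tⁿ` satisfies
`aₙ₊₂ ≤ p t aₙ₊₁ + q t² aₙ`, a convex combination; hence `Mₙ = max aₙ₊₁ aₙ` is nonincreasing.
Where `‖f‖ ≤ p - δ` the first coefficient drops by `δ t`, and two steps later `M` has shrunk by
the factor `1 - p δ t²`. Such indices occur in every window of length `r + 1`, so the limit `ℓ`
of `M` satisfies `ℓ ≤ (1 - p δ t²) ℓ`, i.e. `ℓ = 0`.
-/

open Filter Topology

section TwoTermRecurrence

variable {a : ℕ → ℝ} {α β : ℝ}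

theorem antitone_max_succ_of_le_convex (hα : 0 ≤ α) (hβ : 0 ≤ β) (hαβ : α + β = 1)
    (ha : ∀ n, a (n + 2) ≤ α * a (n + 1) + β * a n) :
    Antitone fun n => max (a (n + 1)) (a n) := by
  refine antitone_nat_of_succ_le fun n => max_le ?_ (le_max_left _ _)
  calc a (n + 2) ≤ α * a (n + 1) + β * a n := ha n
    _ ≤ α * max (a (n + 1)) (a n) + β * max (a (n + 1)) (a n) := by
        gcongr
        exacts [le_max_left _ _, le_max_right _ _]
    _ = max (a (n + 1)) (a n) := by rw [← add_mul, hαβ, one_mul]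

theorem max_add_two_le_of_le_sub {η : ℝ} (ha₀ : ∀ n, 0 ≤ a n) (hη : 0 ≤ η) (hηα : η ≤ α)
    (hβ : 0 ≤ β) (hαβ : α + β = 1) (ha : ∀ n, a (n + 2) ≤ α * a (n + 1) + β * a n) {m : ℕ}
    (ham : a (m + 2) ≤ (α - η) * a (m + 1) + β * a m) :
    max (a (m + 3)) (a (m + 2)) ≤ (1 - α * η) * max (a (m + 1)) (a m) := by
  set M := max (a (m + 1)) (a m)
  have hM : 0 ≤ M := (ha₀ m).trans (le_max_right _ _)
  have h₂ : a (m + 2) ≤ (1 - η) * M :=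
    calc a (m + 2) ≤ (α - η) * a (m + 1) + β * a m := ham
      _ ≤ (α - η) * M + β * M := by
          have := sub_nonneg.2 hηα
          gcongr
          exacts [le_max_left _ _, le_max_right _ _]
      _ = (1 - η) * M := by linear_combination M * hαβ
  have h₃ : a (m + 3) ≤ (1 - α * η) * M :=
    calc a (m + 3) ≤ α * a (m + 2) + β * a (m + 1) := ha (m + 1)
      _ ≤ α * ((1 - η) * M) + β * M := by
          gcongr
          exacts [(hη.trans hηα), le_max_left _ _]
      _ = (1 - α * η) * M := by linear_combination M * hαβ
  refine max_le h₃ (h₂.trans ?_)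
  have : α * η ≤ η := mul_le_of_le_one_left hη (by linarith)
  gcongr

end TwoTermRecurrence

theorem eventually_le_mul_of_eventually_exists_Icc {M : ℕ → ℝ} (hM : Antitone M) {ρ : ℝ}
    (hρ : 0 ≤ ρ) {P : ℕ → Prop} (hP : ∀ m, P (m + 1) → M (m + 2) ≤ ρ * M m) {r : ℕ}
    (hwin : ∀ᶠ n in atTop, ∃ j ∈ Finset.Icc (n - r) n, P j) :
    ∀ᶠ n in atTop, M (n + (r + 2)) ≤ ρ * M n := by
  filter_upwards [(tendsto_add_atTop_nat (r + 1)).eventually hwin] with n ⟨j, hj, hPj⟩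
  obtain ⟨m, rfl⟩ : ∃ m, j = m + 1 := ⟨j - 1, by simp at hj; omega⟩
  simp only [Finset.mem_Icc] at hj
  calc M (n + (r + 2)) ≤ M (m + 2) := hM (by omega)
    _ ≤ ρ * M m := hP m hPj
    _ ≤ ρ * M n := by gcongr; exact hM (by omega)

theorem Antitone.tendsto_zero_of_eventually_le_mul {M : ℕ → ℝ} (hM : Antitone M)
    (hM₀ : ∀ n, 0 ≤ M n) {ρ : ℝ} (hρ : ρ < 1) {L : ℕ}
    (hML : ∀ᶠ n in atTop, M (n + L) ≤ ρ * M n) : Tendsto M atTop (𝓝 0) := by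
  have hbdd : BddBelow (Set.range M) := ⟨0, Set.forall_mem_range.2 hM₀⟩
  have hlim := tendsto_atTop_ciInf hM hbdd
  have hℓ : ⨅ n, M n ≤ ρ * ⨅ n, M n :=
    le_of_tendsto_of_tendsto ((tendsto_add_atTop_iff_nat L).2 hlim) (hlim.const_mul ρ) hML
  have hℓ₀ : 0 ≤ ⨅ n, M n := le_ciInf hM₀
  rwa [show ⨅ n, M n = 0 by nlinarith] at hlim

theorem norm_mul_pow_le_of_eq_mul_add_mul {R : Type*} [SeminormedRing R] {A f g : ℕ → R} {m : ℕ}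
    (hA : A (m + 2) = f (m + 1) * A (m + 1) + g m * A m) {C D t : ℝ} (ht : 0 ≤ t)
    (hf : ‖f (m + 1)‖ ≤ C) (hg : ‖g m‖ ≤ D) :
    ‖A (m + 2)‖ * t ^ (m + 2) ≤
      C * t * (‖A (m + 1)‖ * t ^ (m + 1)) + D * t ^ 2 * (‖A m‖ * t ^ m) := by
  have hnorm : ‖A (m + 2)‖ ≤ C * ‖A (m + 1)‖ + D * ‖A m‖ := by
    rw [hA]
    refine (norm_add_le _ _).trans (add_le_add ?_ ?_) <;> refine (norm_mul_le _ _).trans ?_ <;>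
      gcongr
  calc ‖A (m + 2)‖ * t ^ (m + 2) ≤ (C * ‖A (m + 1)‖ + D * ‖A m‖) * t ^ (m + 2) := by gcongr
    _ = _ := by ring

theorem add_sqrt_sq_add_four_mul_div_two_pos {p q : ℝ} (hq : 0 < q) :
    0 < (p + √(p ^ 2 + 4 * q)) / 2 := by
  have : -p < √(p ^ 2 + 4 * q) := Real.lt_sqrt_of_sq_lt (by linarith [neg_sq p])
  linarith

theorem mul_inv_add_mul_inv_sq_of_sq_eq {p q θ : ℝ} (hθ : θ ≠ 0) (h : θ ^ 2 = p * θ + q) :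
    p * θ⁻¹ + q * θ⁻¹ ^ 2 = 1 := by
  field_simp
  linear_combination -h

theorem add_sqrt_sq_add_four_mul_div_two_sq {p q : ℝ} (hq : 0 ≤ q) :
    ((p + √(p ^ 2 + 4 * q)) / 2) ^ 2 = p * ((p + √(p ^ 2 + 4 * q)) / 2) + q := by
  have := Real.sq_sqrt (show 0 ≤ p ^ 2 + 4 * q by positivity)
  linear_combination this / 4

theorem stmt_10 (p q : ℤ) (hq : 1 ≤ q) (hpq : q ≤ p) (θ : ℝ)
    (hθ : θ = ((p : ℝ) + Real.sqrt ((p : ℝ) ^ 2 + 4 * (q : ℝ))) / 2)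
    (A f g : ℕ → ℂ)
    (hA : ∀ n : ℕ, 1 ≤ n → A (n + 1) = f n * A n + g (n - 1) * A (n - 1))
    (hf : ∀ n : ℕ, ‖f n‖ ≤ (p : ℝ))
    (hg : ∀ n : ℕ, ‖g n‖ ≤ (q : ℝ))
    (hwin : ∃ δ' : ℝ, 0 < δ' ∧ δ' < 1 ∧ ∃ r : ℕ,
      ∀ᶠ n : ℕ in Filter.atTop, ∃ j ∈ Finset.Icc (n - r) n,
        ‖f j‖ ≤ (p : ℝ) - δ') :
    Filter.Tendsto (fun n : ℕ => ‖A n‖ ^ 2 / θ ^ (2 * n))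
      Filter.atTop (nhds 0) := by
  obtain ⟨δ, hδ₀, hδ₁, r, hwin⟩ := hwin
  have hp : (1 : ℝ) ≤ p := by exact_mod_cast hq.trans hpq
  have hq₀ : (0 : ℝ) < q := by exact_mod_cast hq
  have hθ₀ : 0 < θ := hθ ▸ add_sqrt_sq_add_four_mul_div_two_pos hq₀
  set t := θ⁻¹
  have ht : 0 < t := inv_pos.2 hθ₀
  have hpt : p * t + q * t ^ 2 = 1 := mul_inv_add_mul_inv_sq_of_sq_eq hθ₀.ne'
    (hθ ▸ add_sqrt_sq_add_four_mul_div_two_sq hq₀.le)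
  set a : ℕ → ℝ := fun n => ‖A n‖ * t ^ n
  have ha₀ (n : ℕ) : 0 ≤ a n := by positivity
  have hrec (m : ℕ) {C : ℝ} (hC : ‖f (m + 1)‖ ≤ C) :
      a (m + 2) ≤ C * t * a (m + 1) + q * t ^ 2 * a m :=
    norm_mul_pow_le_of_eq_mul_add_mul (hA (m + 1) le_add_self) ht.le hC (hg m)
  have hrec' (m : ℕ) := hrec m (hf (m + 1))
  have hanti := antitone_max_succ_of_le_convex (by positivity) (by positivity) hpt hrec'
  have hδp : δ * t ≤ p * t := by gcongr; linarith
  have hpt₁ : p * t ≤ 1 := by linarith [show 0 ≤ q * t ^ 2 by positivity]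
  have hcontr := eventually_le_mul_of_eventually_exists_Icc hanti
    (sub_nonneg.2 (mul_le_one₀ hpt₁ (by positivity) (hδp.trans hpt₁)))
    (fun m hm => max_add_two_le_of_le_sub ha₀ (by positivity) hδp (by positivity) hpt hrec'
      (by simpa [sub_mul] using hrec m hm)) hwin
  have hmax := hanti.tendsto_zero_of_eventually_le_mul (fun n => (ha₀ n).trans (le_max_right _ _))
    (sub_lt_self 1 (by positivity)) hcontr
  have ha : Tendsto a atTop (𝓝 0) := squeeze_zero ha₀ (fun n => le_max_right _ _) hmax
  convert ha.pow 2 using 2 with n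
  · rw [mul_pow, ← pow_mul, inv_pow, mul_comm n 2, div_eq_mul_inv]
  · simp
end

section
/- Let p, q be integers with p ≥ q ≥ 1 and θ = (p + √(p² + 4q))/2. Let (A_n), (f_n), (g_n) be sequences of complex numbers satisfying A_{n+1} = f_n·A_n + g_{n−1}·A_{n−1} for all n ≥ 1, with |f_n| ≤ p and |g_n| ≤ q for all n. Suppose there exist δ' ∈ (0,1) and r ∈ ℕ such that for every sufficiently large n there is at least one j ∈ {n−r, …, n} with |f_j| ≤ p − δ'. Then there exist a constant c > 0 and n₀ ∈ ℕ such that |A_n|²/θ^{2n} ≤ c/n for all n ≥ n₀. -/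
open Filter Finset

/-! The normalised amplitudes `B n = ‖A n‖ / θ ^ n` satisfy
`B (n + 2) ≤ a n * B (n + 1) + b * B n` with `a n = ‖f (n + 1)‖ / θ ≤ p / θ` and `b = q / θ ^ 2`,
and `p / θ + q / θ ^ 2 = 1` because `θ ^ 2 = p θ + q`. Hence the running maximum
`max (B n) (B (n + 1))` never increases, and it shrinks by a fixed factor `λ < 1` across every
index where `‖f‖ ≤ p - δ'`. Such indices occur in every window of length `r + 1`, so `B` decays
geometrically, which is much stronger than `B n ^ 2 = O(1 / n)`. -/

noncomputable def perronRoot (p q : ℝ) : ℝ := (p + √(p ^ 2 + 4 * q)) / 2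

lemma perronRoot_sq {p q : ℝ} (h : 0 ≤ p ^ 2 + 4 * q) :
    perronRoot p q ^ 2 = p * perronRoot p q + q := by
  have := Real.sq_sqrt h
  unfold perronRoot
  linear_combination this / 4

lemma lt_perronRoot (p : ℝ) {q : ℝ} (hq : 0 < q) : p < perronRoot p q := by
  have : |p| < √(p ^ 2 + 4 * q) := by
    rw [← Real.sqrt_sq_eq_abs]
    exact Real.sqrt_lt_sqrt (sq_nonneg p) (by linarith)
  unfold perronRoot
  linarith [le_abs_self p]

lemma exists_pos_le_div_of_le_pow_div {u : ℕ → ℝ} {C l : ℝ} {N s : ℕ} (hC : 0 ≤ C)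
    (hl0 : 0 ≤ l) (hl1 : l < 1) (hs : 0 < s)
    (hu : ∀ n, N ≤ n → u n ≤ C * l ^ ((n - N) / s)) :
    ∃ c, 0 < c ∧ ∃ n₀ : ℕ, ∀ n, n₀ ≤ n → u n ≤ c / n := by
  obtain ⟨K, hK⟩ := (tendsto_self_mul_const_pow_of_lt_one hl0 hl1).bddAbove_range
  have hK' : ∀ k : ℕ, ((k : ℝ) + 1) * l ^ k ≤ K + 1 := fun k => by
    have := hK (Set.mem_range_self k)
    nlinarith [pow_le_one₀ hl0 hl1.le (n := k)]
  have hK0 : 0 ≤ K + 1 := le_trans (by positivity) (hK' 0)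
  refine ⟨C * ((N + s) * (K + 1)) + 1, by positivity, N + 1, fun n hn => ?_⟩
  set k := (n - N) / s
  have hn0 : (0 : ℝ) < n := Nat.cast_pos.2 (by omega)
  -- `n - N < s * (k + 1)`, so `n ≤ (N + s) * (k + 1)`
  have hnk : (n : ℝ) ≤ (N + s) * (k + 1) := by
    have : n ≤ N + s * (k + 1) := by
      have : n - N < k * s + s := Nat.lt_div_mul_add hs
      rw [mul_add_one, mul_comm]
      omega
    have hs1 : (1 : ℝ) ≤ s := by exact_mod_cast hs
    calc (n : ℝ) ≤ N + s * (k + 1) := by exact_mod_cast this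
      _ ≤ (N + s) * (k + 1) := by nlinarith [(by positivity : (0 : ℝ) ≤ N * k)]
  have : n * l ^ k ≤ (N + s) * (K + 1) :=
    calc (n : ℝ) * l ^ k ≤ (N + s) * (k + 1) * l ^ k := by gcongr
      _ ≤ (N + s) * (K + 1) := by rw [mul_assoc]; gcongr; exact hK' k
  rw [le_div_iff₀ hn0]
  calc u n * n ≤ C * l ^ k * n := by gcongr; exact hu n (by omega)
    _ = C * (n * l ^ k) := by ring
    _ ≤ C * ((N + s) * (K + 1)) + 1 := by nlinarith

def pairMax (B : ℕ → ℝ) (n : ℕ) : ℝ := max (B n) (B (n + 1))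

section TwoStepContraction

variable {B a : ℕ → ℝ} {b η : ℝ}

lemma pairMax_nonneg (hB : ∀ n, 0 ≤ B n) (n : ℕ) : 0 ≤ pairMax B n :=
  (hB n).trans (le_max_left _ _)

lemma apply_add_two_le_mul_pairMax (ha : ∀ n, 0 ≤ a n) (hb : 0 ≤ b)
    (hrec : ∀ n, B (n + 2) ≤ a n * B (n + 1) + b * B n) (n : ℕ) :
    B (n + 2) ≤ (a n + b) * pairMax B n :=
  calc B (n + 2) ≤ a n * B (n + 1) + b * B n := hrec n
    _ ≤ a n * pairMax B n + b * pairMax B n := by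
      gcongr
      · exact ha n
      · exact le_max_right _ _
      · exact le_max_left _ _
    _ = (a n + b) * pairMax B n := by ring

lemma pairMax_antitone (hB : ∀ n, 0 ≤ B n) (ha : ∀ n, 0 ≤ a n) (hb : 0 ≤ b)
    (hab : ∀ n, a n + b ≤ 1) (hrec : ∀ n, B (n + 2) ≤ a n * B (n + 1) + b * B n) :
    Antitone (pairMax B) := by
  refine antitone_nat_of_succ_le fun n => max_le (le_max_right _ _) ?_
  calc B (n + 2) ≤ (a n + b) * pairMax B n := apply_add_two_le_mul_pairMax ha hb hrec n
    _ ≤ 1 * pairMax B n := by gcongr; exacts [pairMax_nonneg hB n, hab n]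
    _ = pairMax B n := one_mul _

/-- A step with `a m + b ≤ 1 - η` costs `B (m + 2)` a factor `1 - η`; the next step, with
`a (m + 1) ≤ 1 - b`, passes on the weight-`(1 - b)` part of that gain. -/
lemma pairMax_add_two_le (hB : ∀ n, 0 ≤ B n) (ha : ∀ n, 0 ≤ a n) (hb : 0 ≤ b)
    (hab : ∀ n, a n + b ≤ 1) (hrec : ∀ n, B (n + 2) ≤ a n * B (n + 1) + b * B n)
    (hη : 0 ≤ η) {m : ℕ} (hm : a m + b ≤ 1 - η) :
    pairMax B (m + 2) ≤ (1 - (1 - b) * η) * pairMax B m := by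
  have hM := pairMax_nonneg hB m
  have hη1 : 0 ≤ 1 - η := by linarith [ha m]
  have h2 : B (m + 2) ≤ (1 - η) * pairMax B m :=
    (apply_add_two_le_mul_pairMax ha hb hrec m).trans (by gcongr)
  have h3 : B (m + 3) ≤ (1 - (1 - b) * η) * pairMax B m :=
    calc B (m + 3) ≤ a (m + 1) * B (m + 2) + b * B (m + 1) := hrec (m + 1)
      _ ≤ (1 - b) * ((1 - η) * pairMax B m) + b * pairMax B m := by
        have ha1 : a (m + 1) ≤ 1 - b := by linarith [hab (m + 1)]
        exact add_le_add (mul_le_mul ha1 h2 (hB _) (by linarith [ha (m + 1)]))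
          (mul_le_mul_of_nonneg_left (le_max_right _ _) hb)
      _ = (1 - (1 - b) * η) * pairMax B m := by ring
  refine max_le (h2.trans ?_) h3
  gcongr
  nlinarith

lemma pairMax_le_mul_pow (hB : ∀ n, 0 ≤ B n) (ha : ∀ n, 0 ≤ a n) (hb : 0 ≤ b)
    (hab : ∀ n, a n + b ≤ 1) (hrec : ∀ n, B (n + 2) ≤ a n * B (n + 1) + b * B n)
    (hη : 0 ≤ η) {N r : ℕ} (hgood : ∀ m, N ≤ m → ∃ j ∈ Icc m (m + r), a j + b ≤ 1 - η)
    (n : ℕ) (hn : N ≤ n) :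
    pairMax B n ≤ pairMax B N * (1 - (1 - b) * η) ^ ((n - N) / (r + 2)) := by
  set l := 1 - (1 - b) * η
  have hanti := pairMax_antitone hB ha hb hab hrec
  have hl : 0 ≤ l := by
    obtain ⟨j, -, hgj⟩ := hgood N le_rfl
    nlinarith [ha j]
  have hwindow : ∀ m, N ≤ m → pairMax B (m + (r + 2)) ≤ l * pairMax B m := fun m hm => by
    obtain ⟨j, hj, hgj⟩ := hgood m hm
    rw [mem_Icc] at hj
    calc pairMax B (m + (r + 2)) ≤ pairMax B (j + 2) := hanti (by omega)
      _ ≤ l * pairMax B j := pairMax_add_two_le hB ha hb hab hrec hη hgj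
      _ ≤ l * pairMax B m := by gcongr; exact hanti hj.1
  have hgeom : ∀ k, pairMax B (N + (r + 2) * k) ≤ pairMax B N * l ^ k := fun k => by
    induction k with
    | zero => simp
    | succ k ih =>
      calc pairMax B (N + (r + 2) * (k + 1)) = pairMax B (N + (r + 2) * k + (r + 2)) := by
            ring_nf
        _ ≤ l * pairMax B (N + (r + 2) * k) := hwindow _ (by omega)
        _ ≤ l * (pairMax B N * l ^ k) := by gcongr
        _ = pairMax B N * l ^ (k + 1) := by ring
  refine (hanti ?_).trans (hgeom _)
  have := Nat.div_mul_le_self (n - N) (r + 2)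
  rw [mul_comm]
  omega

lemma exists_pos_sq_le_div (hB : ∀ n, 0 ≤ B n) (ha : ∀ n, 0 ≤ a n) (hb : 0 ≤ b)
    (hab : ∀ n, a n + b ≤ 1) (hrec : ∀ n, B (n + 2) ≤ a n * B (n + 1) + b * B n)
    (hb1 : b < 1) (hη : 0 < η) {N r : ℕ}
    (hgood : ∀ m, N ≤ m → ∃ j ∈ Icc m (m + r), a j + b ≤ 1 - η) :
    ∃ c, 0 < c ∧ ∃ n₀ : ℕ, ∀ n, n₀ ≤ n → B n ^ 2 ≤ c / n := by
  obtain ⟨j, -, hgj⟩ := hgood N le_rfl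
  have hanti := pairMax_antitone hB ha hb hab hrec
  refine exists_pos_le_div_of_le_pow_div (l := 1 - (1 - b) * η) (N := N) (s := r + 2)
    (sq_nonneg (pairMax B N)) (by nlinarith [ha j]) (by nlinarith) (by omega) fun n hn => ?_
  have hdecay := pairMax_le_mul_pow hB ha hb hab hrec hη.le hgood n hn
  calc B n ^ 2 ≤ pairMax B n * pairMax B n := by
        rw [sq]; exact mul_le_mul (le_max_left _ _) (le_max_left _ _) (hB n) (pairMax_nonneg hB n)
    _ ≤ pairMax B N * (pairMax B N * (1 - (1 - b) * η) ^ ((n - N) / (r + 2))) :=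
        mul_le_mul (hanti hn) hdecay (pairMax_nonneg hB n) (pairMax_nonneg hB N)
    _ = pairMax B N ^ 2 * (1 - (1 - b) * η) ^ ((n - N) / (r + 2)) := by ring

end TwoStepContraction

lemma norm_div_pow_add_two_le {R : Type*} [SeminormedRing R] {A f g : ℕ → R} {θ q : ℝ}
    (hθ : 0 < θ) (hA : ∀ n, 1 ≤ n → A (n + 1) = f n * A n + g (n - 1) * A (n - 1))
    (hg : ∀ n, ‖g n‖ ≤ q) (n : ℕ) :
    ‖A (n + 2)‖ / θ ^ (n + 2) ≤
      ‖f (n + 1)‖ / θ * (‖A (n + 1)‖ / θ ^ (n + 1)) + q / θ ^ 2 * (‖A n‖ / θ ^ n) := by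
  have hnorm : ‖A (n + 2)‖ ≤ ‖f (n + 1)‖ * ‖A (n + 1)‖ + q * ‖A n‖ :=
    calc ‖A (n + 2)‖ = ‖f (n + 1) * A (n + 1) + g n * A n‖ := by rw [hA (n + 1) le_add_self]; rfl
      _ ≤ ‖f (n + 1)‖ * ‖A (n + 1)‖ + ‖g n‖ * ‖A n‖ :=
        (norm_add_le _ _).trans (add_le_add (norm_mul_le _ _) (norm_mul_le _ _))
      _ ≤ ‖f (n + 1)‖ * ‖A (n + 1)‖ + q * ‖A n‖ := by gcongr; exact hg n
  calc ‖A (n + 2)‖ / θ ^ (n + 2) ≤ (‖f (n + 1)‖ * ‖A (n + 1)‖ + q * ‖A n‖) / θ ^ (n + 2) := by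
        gcongr
    _ = _ := by field_simp; ring

theorem stmt_11 (p q : ℤ) (hq : 1 ≤ q) (hpq : q ≤ p) (θ : ℝ)
    (hθ : θ = ((p : ℝ) + Real.sqrt ((p : ℝ) ^ 2 + 4 * (q : ℝ))) / 2)
    (A f g : ℕ → ℂ)
    (hA : ∀ n : ℕ, 1 ≤ n → A (n + 1) = f n * A n + g (n - 1) * A (n - 1))
    (hf : ∀ n : ℕ, ‖f n‖ ≤ (p : ℝ))
    (hg : ∀ n : ℕ, ‖g n‖ ≤ (q : ℝ))
    (hwin : ∃ δ' : ℝ, 0 < δ' ∧ δ' < 1 ∧ ∃ r : ℕ,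
      ∀ᶠ n : ℕ in Filter.atTop, ∃ j ∈ Finset.Icc (n - r) n,
        ‖f j‖ ≤ (p : ℝ) - δ') :
    ∃ c : ℝ, 0 < c ∧ ∃ n₀ : ℕ, ∀ n : ℕ, n₀ ≤ n →
      ‖A n‖ ^ 2 / θ ^ (2 * n) ≤ c / (n : ℝ) := by
  obtain ⟨δ, hδ, -, r, hev⟩ := hwin
  obtain ⟨N, hN⟩ := eventually_atTop.1 hev
  have hq0 : (0 : ℝ) < q := Int.cast_pos.2 (by omega)
  have hp0 : (0 : ℝ) < p := Int.cast_pos.2 (by omega)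
  have hθsq : θ ^ 2 = p * θ + q := hθ ▸ perronRoot_sq (by positivity)
  have hθ0 : 0 < θ := hp0.trans (hθ ▸ lt_perronRoot _ hq0)
  have hsum : p / θ + q / θ ^ 2 = 1 := by field_simp; linarith
  have hgood : ∀ m, N ≤ m → ∃ j ∈ Icc m (m + r), ‖f (j + 1)‖ / θ + q / θ ^ 2 ≤ 1 - δ / θ :=
    fun m hm => by
      obtain ⟨j, hj, hfj⟩ := hN (m + r + 1) (by omega)
      rw [mem_Icc] at hj
      refine ⟨j - 1, mem_Icc.2 ⟨by omega, by omega⟩, ?_⟩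
      rw [Nat.sub_add_cancel (by omega)]
      calc ‖f j‖ / θ + q / θ ^ 2 ≤ (p - δ) / θ + q / θ ^ 2 := by gcongr
        _ = 1 - δ / θ := by rw [← hsum]; ring
  obtain ⟨c, hc, n₀, hbound⟩ := exists_pos_sq_le_div (B := fun n => ‖A n‖ / θ ^ n)
    (fun n => by positivity) (fun n => by positivity) (by positivity)
    (fun n => by rw [← hsum]; gcongr; exact hf _) (norm_div_pow_add_two_le hθ0 hA hg)
    (by rw [← hsum]; exact lt_add_of_pos_left _ (by positivity)) (by positivity) hgood
  refine ⟨c, hc, n₀, fun n hn => ?_⟩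
  rw [pow_mul', ← div_pow]
  exact hbound n hn
end

section
/- Let m ∈ ℕ with m ≥ 1 and λ_m = (m + √(m² + 4))/2. Let k be a real number with k ∈ ℚ(λ_m) but k ∉ (1/√(m² + 4))·ℤ[λ_m], i.e. k = a + b·λ_m for some rationals a, b, but there are no integers c, d with k = (c + d·λ_m)/√(m² + 4). Then there exist δ ∈ (0,1) and r ∈ ℕ such that for all n ∈ ℕ: if ‖k·λ_mⁿ‖ < δ, then ‖k·λ_m^j‖ ≥ δ for at least one j ∈ {n+1, …, n+r}. -/
/-!
Write `λ = nobleMean m` and `λ' = nobleMeanConj m = -1/λ`. If `‖kλⁿ⁺ᵗ‖ < δ = 1/(m+2)` for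
`t = 0, …, r+1`, the nearest integers `Nₜ` obey the recurrence `N_{t+2} = m N_{t+1} + Nₜ` of
`kλⁿ⁺ᵗ`, hence so do the errors `εₜ = kλⁿ⁺ᵗ - Nₜ`, and `ε_{t+1} - λ' εₜ = λᵗ (ε₁ - λ' ε₀)`. The
left side stays below `2δ ≤ 1`, while `|ε₁ - λ' ε₀|` is bounded below uniformly in `n`: after
clearing the denominators of `k` it becomes a nonzero element of `ℤ[λ]` (nonzero because `kλⁿ` is
outside the Fourier module) whose conjugate is bounded (because `|λ'| ≤ 1`), and its norm is a
nonzero integer. So `r` is bounded in terms of `k` alone.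
-/

/-- The distance from a real number to the nearest integer,
`‖x‖ = min { |x - m| : m ∈ ℤ }`. -/
noncomputable def distNearestInt (x : ℝ) : ℝ := |x - round x|

noncomputable def nobleMean (m : ℕ) : ℝ := (m + √((m : ℝ) ^ 2 + 4)) / 2

noncomputable def nobleMeanConj (m : ℕ) : ℝ := (m - √((m : ℝ) ^ 2 + 4)) / 2

def fourierModule (m : ℕ) : Set ℝ :=
  {x | ∃ c d : ℤ, x = ((c : ℝ) + (d : ℝ) * nobleMean m) / √((m : ℝ) ^ 2 + 4)}

section NobleMean

variable (m : ℕ)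

lemma sq_sqrt_sq_add_four : √((m : ℝ) ^ 2 + 4) ^ 2 = (m : ℝ) ^ 2 + 4 :=
  Real.sq_sqrt (by positivity)

lemma nobleMean_sq : nobleMean m ^ 2 = m * nobleMean m + 1 := by
  unfold nobleMean; linear_combination (1 / 4 : ℝ) * sq_sqrt_sq_add_four m

lemma nobleMeanConj_sq : nobleMeanConj m ^ 2 = m * nobleMeanConj m + 1 := by
  unfold nobleMeanConj; linear_combination (1 / 4 : ℝ) * sq_sqrt_sq_add_four m

lemma nobleMean_add_nobleMeanConj : nobleMean m + nobleMeanConj m = m := by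
  unfold nobleMean nobleMeanConj; ring

lemma nobleMean_mul_nobleMeanConj : nobleMean m * nobleMeanConj m = -1 := by
  unfold nobleMean nobleMeanConj; linear_combination (-1 / 4 : ℝ) * sq_sqrt_sq_add_four m

lemma nobleMean_sub_nobleMeanConj : nobleMean m - nobleMeanConj m = √((m : ℝ) ^ 2 + 4) := by
  unfold nobleMean nobleMeanConj; ring

lemma natCast_lt_sqrt_sq_add_four : (m : ℝ) < √((m : ℝ) ^ 2 + 4) := by
  rw [Real.lt_sqrt (by positivity)]; linarith

lemma abs_nobleMeanConj_le_one : |nobleMeanConj m| ≤ 1 := by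
  have hs := sq_sqrt_sq_add_four m
  have := natCast_lt_sqrt_sq_add_four m
  unfold nobleMeanConj
  rw [abs_le]; constructor <;> nlinarith [Real.sqrt_nonneg ((m : ℝ) ^ 2 + 4)]

lemma nobleMean_pos : 0 < nobleMean m := by
  unfold nobleMean; linarith [natCast_lt_sqrt_sq_add_four m, m.cast_nonneg (α := ℝ)]

variable {m}

lemma one_lt_nobleMean (hm : 1 ≤ m) : 1 < nobleMean m := by
  have : (1 : ℝ) ≤ m := by exact_mod_cast hm
  unfold nobleMean; linarith [natCast_lt_sqrt_sq_add_four m]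

lemma irrational_sqrt_sq_add_four (hm : 1 ≤ m) : Irrational √((m : ℝ) ^ 2 + 4) := by
  have hcast : (m : ℝ) ^ 2 + 4 = ((m ^ 2 + 4 : ℕ) : ℝ) := by push_cast; rfl
  rw [hcast, irrational_sqrt_natCast_iff]
  rintro ⟨r, hr⟩
  have hlo : m < r := by nlinarith
  have hhi : r < m + 2 := by nlinarith
  obtain rfl : r = m + 1 := by omega
  ring_nf at hr; omega

lemma irrational_nobleMean (hm : 1 ≤ m) : Irrational (nobleMean m) :=
  ((irrational_sqrt_sq_add_four hm).natCast_add m).div_natCast two_ne_zero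

lemma irrational_nobleMeanConj (hm : 1 ≤ m) : Irrational (nobleMeanConj m) :=
  ((irrational_sqrt_sq_add_four hm).natCast_sub m).div_natCast two_ne_zero

lemma add_mul_ne_zero_of_irrational {x : ℝ} (hx : Irrational x) {e f : ℤ} (hef : e ≠ 0 ∨ f ≠ 0) :
    (e : ℝ) + f * x ≠ 0 := by
  rcases eq_or_ne f 0 with rfl | hf
  · simpa using hef
  · exact ((hx.intCast_mul hf).intCast_add e).ne_zero

lemma one_le_abs_mul_abs_conj (hm : 1 ≤ m) {e f : ℤ} (hef : e ≠ 0 ∨ f ≠ 0) :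
    1 ≤ |(e : ℝ) + f * nobleMean m| * |(e : ℝ) + f * nobleMeanConj m| := by
  have hnorm : ((e : ℝ) + f * nobleMean m) * (e + f * nobleMeanConj m) =
      ((e ^ 2 + m * e * f - f ^ 2 : ℤ) : ℝ) := by
    push_cast
    linear_combination (e * f : ℝ) * nobleMean_add_nobleMeanConj m +
      (f ^ 2 : ℝ) * nobleMean_mul_nobleMeanConj m
  have hne : e ^ 2 + m * e * f - f ^ 2 ≠ 0 := by
    intro h
    rw [h, Int.cast_zero] at hnorm
    rcases mul_eq_zero.mp hnorm with h' | h'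
    · exact add_mul_ne_zero_of_irrational (irrational_nobleMean hm) hef h'
    · exact add_mul_ne_zero_of_irrational (irrational_nobleMeanConj hm) hef h'
  rw [← abs_mul, hnorm]
  exact_mod_cast Int.one_le_abs hne

end NobleMean

lemma exists_int_mul_pow_eq (m : ℕ) (A B : ℤ) (n : ℕ) :
    ∃ p q : ℤ, ∀ x : ℝ, x ^ 2 = m * x + 1 → ((A : ℝ) + B * x) * x ^ n = p + q * x := by
  induction n with
  | zero => exact ⟨A, B, fun x _ => by simp⟩
  | succ n ih =>
    obtain ⟨p, q, hpq⟩ := ih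
    refine ⟨q, p + m * q, fun x hx => ?_⟩
    rw [pow_succ, ← mul_assoc, hpq x hx]
    push_cast
    linear_combination (q : ℝ) * hx

lemma mem_fourierModule_of_mul_nobleMean {m : ℕ} {x : ℝ}
    (hx : x * nobleMean m ∈ fourierModule m) : x ∈ fourierModule m := by
  obtain ⟨c, d, h⟩ := hx
  refine ⟨d - c * m, c, ?_⟩
  have hinv : x = x * nobleMean m * (nobleMean m - m) := by
    linear_combination (-x) * nobleMean_sq m
  rw [hinv, h]
  push_cast
  linear_combination (d / √((m : ℝ) ^ 2 + 4)) * nobleMean_sq m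

lemma mul_pow_notMem_fourierModule {m : ℕ} {x : ℝ} (hx : x ∉ fourierModule m) (n : ℕ) :
    x * nobleMean m ^ n ∉ fourierModule m := by
  induction n with
  | zero => simpa using hx
  | succ n ih =>
    rw [pow_succ, ← mul_assoc]
    exact fun h => ih (mem_fourierModule_of_mul_nobleMean h)

lemma exists_int_mul_add_mul_eq (a b : ℚ) (x : ℝ) :
    ∃ Q A B : ℤ, 0 < Q ∧ (Q : ℝ) * (a + b * x) = A + B * x := by
  refine ⟨a.den * b.den, a.num * b.den, b.num * a.den, by positivity, ?_⟩
  have ha : (a : ℝ) * a.den = a.num := by exact_mod_cast Rat.mul_den_eq_num a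
  have hb : (b : ℝ) * b.den = b.num := by exact_mod_cast Rat.mul_den_eq_num b
  push_cast
  rw [← ha, ← hb]
  ring

/-- The two factors are `|e + fλ|` and `|e + fλ'|` for integers `e, f`, not both zero because
`x` lies outside the Fourier module. -/
lemma one_le_abs_mul_abs_of_notMem_fourierModule {m : ℕ} (hm : 1 ≤ m) {x : ℝ}
    (hx : x ∉ fourierModule m) {Q p q : ℤ} (hQ : Q ≠ 0)
    (hQx : Q * x = p + q * nobleMean m) (N₀ N₁ : ℤ) :
    1 ≤ |Q * ((x * nobleMean m - N₁) - nobleMeanConj m * (x - N₀))| *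
      |Q * ((x * nobleMean m - N₁) - nobleMean m * (x - N₀)) -
        √((m : ℝ) ^ 2 + 4) * (p + q * nobleMeanConj m)| := by
  have hconj : nobleMeanConj m = m - nobleMean m := by
    linear_combination nobleMean_add_nobleMeanConj m
  have hsqrt : √((m : ℝ) ^ 2 + 4) = 2 * nobleMean m - m := by
    linear_combination -(nobleMean_sub_nobleMeanConj m) - hconj
  set e : ℤ := 2 * q - m * p - Q * (N₁ - m * N₀)
  set f : ℤ := 2 * p + m * q - Q * N₀
  have he : (e : ℝ) + f * nobleMean m =
      Q * ((x * nobleMean m - N₁) - nobleMeanConj m * (x - N₀)) := by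
    simp only [e, f, hconj]
    push_cast
    linear_combination (m - 2 * nobleMean m) * hQx - 2 * q * nobleMean_sq m
  have hf : (e : ℝ) + f * nobleMeanConj m =
      Q * ((x * nobleMean m - N₁) - nobleMean m * (x - N₀)) -
        √((m : ℝ) ^ 2 + 4) * (p + q * nobleMeanConj m) := by
    simp only [e, f, hconj, hsqrt]
    push_cast
    linear_combination -2 * q * nobleMean_sq m
  have hef : e ≠ 0 ∨ f ≠ 0 := by
    by_contra! h
    apply hx
    refine ⟨N₁ - m * N₀, N₀, ?_⟩
    have hs : √((m : ℝ) ^ 2 + 4) ≠ 0 := (Real.sqrt_pos.2 (by positivity)).ne'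
    have hQ' : (Q : ℝ) ≠ 0 := by exact_mod_cast hQ
    have h0 : (Q : ℝ) * ((x * nobleMean m - N₁) - nobleMeanConj m * (x - N₀)) = 0 := by
      rw [← he, h.1, h.2]; simp
    have h1 := (mul_eq_zero.mp h0).resolve_left hQ'
    rw [eq_div_iff hs, ← nobleMean_sub_nobleMeanConj]
    push_cast
    linear_combination h1 - (N₀ : ℝ) * nobleMean_add_nobleMeanConj m
  rw [← he, ← hf]
  exact one_le_abs_mul_abs_conj hm hef

lemma exists_pos_le_abs_sub_round {m : ℕ} (hm : 1 ≤ m) {k : ℝ}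
    (hk₁ : ∃ a b : ℚ, k = a + b * nobleMean m) (hk₂ : k ∉ fourierModule m) :
    ∃ c > 0, ∀ n : ℕ,
      c ≤ |(k * nobleMean m ^ n * nobleMean m - round (k * nobleMean m ^ n * nobleMean m)) -
        nobleMeanConj m * (k * nobleMean m ^ n - round (k * nobleMean m ^ n))| := by
  obtain ⟨a, b, rfl⟩ := hk₁
  obtain ⟨Q, A, B, hQ, hk⟩ := exists_int_mul_add_mul_eq a b (nobleMean m)
  set C := √((m : ℝ) ^ 2 + 4) * |A + B * nobleMeanConj m| + Q * (1 + nobleMean m)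
  have hpos := nobleMean_pos m
  have hQ' : (0 : ℝ) < Q := by exact_mod_cast hQ
  have hC : 0 < C := by positivity
  refine ⟨1 / (Q * C), by positivity, fun n => ?_⟩
  set x := (a + b * nobleMean m) * nobleMean m ^ n
  obtain ⟨p, q, hpq⟩ := exists_int_mul_pow_eq m A B n
  have hQx : Q * x = p + q * nobleMean m := by
    rw [← mul_assoc, hk, hpq _ (nobleMean_sq m)]
  have hpq' : |p + q * nobleMeanConj m| ≤ |A + B * nobleMeanConj m| := by
    rw [← hpq _ (nobleMeanConj_sq m), abs_mul, abs_pow]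
    exact mul_le_of_le_one_right (abs_nonneg _)
      (pow_le_one₀ (abs_nonneg _) (abs_nobleMeanConj_le_one m))
  have hnorm := one_le_abs_mul_abs_of_notMem_fourierModule hm
    (mul_pow_notMem_fourierModule hk₂ n) hQ.ne' hQx (round x) (round (x * nobleMean m))
  have hconj : |Q * ((x * nobleMean m - round (x * nobleMean m)) - nobleMean m * (x - round x)) -
      √((m : ℝ) ^ 2 + 4) * (p + q * nobleMeanConj m)| ≤ C := by
    have hε : |(x * nobleMean m - round (x * nobleMean m)) - nobleMean m * (x - round x)| ≤
        1 + nobleMean m := by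
      calc _ ≤ |x * nobleMean m - round (x * nobleMean m)| + |nobleMean m * (x - round x)| :=
            abs_sub _ _
        _ ≤ 1 + nobleMean m * 1 := by
            rw [abs_mul, abs_of_pos hpos]
            gcongr <;> linarith [abs_sub_round x, abs_sub_round (x * nobleMean m)]
        _ = 1 + nobleMean m := by ring
    calc _ ≤ |Q * ((x * nobleMean m - round (x * nobleMean m)) - nobleMean m * (x - round x))| +
          |√((m : ℝ) ^ 2 + 4) * (p + q * nobleMeanConj m)| := abs_sub _ _
      _ ≤ Q * (1 + nobleMean m) + √((m : ℝ) ^ 2 + 4) * |A + B * nobleMeanConj m| := by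
          rw [abs_mul, abs_mul, abs_of_pos hQ', abs_of_nonneg (Real.sqrt_nonneg _)]
          gcongr
      _ = C := add_comm _ _
  rw [div_le_iff₀ (by positivity)]
  calc 1 ≤ _ := hnorm
    _ ≤ |Q * ((x * nobleMean m - round (x * nobleMean m)) - nobleMeanConj m * (x - round x))| *
        C := mul_le_mul_of_nonneg_left hconj (abs_nonneg _)
    _ = _ := by rw [abs_mul, abs_of_pos hQ']; ring

lemma sub_mul_eq_pow_mul_of_recurrence {α β : ℝ} {u : ℕ → ℝ} {R : ℕ}
    (hu : ∀ t, t + 2 ≤ R → u (t + 2) = (α + β) * u (t + 1) - α * β * u t) :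
    ∀ t, t + 1 ≤ R → u (t + 1) - β * u t = α ^ t * (u 1 - β * u 0) := by
  intro t
  induction t with
  | zero => simp
  | succ t ih =>
    intro ht
    rw [hu t ht, pow_succ, mul_right_comm (α ^ t), ← ih (by omega)]
    ring

lemma sub_round_eq_of_distNearestInt_lt {m : ℕ} {x₀ x₁ x₂ : ℝ} (hx : x₂ = m * x₁ + x₀)
    (h₀ : distNearestInt x₀ < 1 / (m + 2)) (h₁ : distNearestInt x₁ < 1 / (m + 2))
    (h₂ : distNearestInt x₂ < 1 / (m + 2)) :
    x₂ - round x₂ = m * (x₁ - round x₁) + (x₀ - round x₀) := by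
  unfold distNearestInt at h₀ h₁ h₂
  set z : ℤ := round x₂ - m * round x₁ - round x₀
  have hz : (z : ℝ) = -((x₂ - round x₂) - m * (x₁ - round x₁) - (x₀ - round x₀)) := by
    simp only [z]; push_cast; rw [hx]; ring
  have hz1 : |(z : ℝ)| < 1 := by
    have hm : (0 : ℝ) < m + 2 := by positivity
    calc |(z : ℝ)| ≤ |x₂ - round x₂| + m * |x₁ - round x₁| + |x₀ - round x₀| := by
          rw [hz, abs_neg]
          calc _ ≤ |x₂ - round x₂ - m * (x₁ - round x₁)| + |x₀ - round x₀| := abs_sub _ _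
            _ ≤ _ := by
              gcongr
              calc _ ≤ |x₂ - round x₂| + |m * (x₁ - round x₁)| := abs_sub _ _
                _ = _ := by rw [abs_mul, Nat.abs_cast]
      _ < 1 / (m + 2) + m * (1 / (m + 2)) + 1 / (m + 2) := by
          linarith [mul_le_mul_of_nonneg_left h₁.le (m.cast_nonneg : (0 : ℝ) ≤ m)]
      _ = 1 := by field_simp; ring
  have : z = 0 := by
    rw [← Int.abs_lt_one_iff]; exact_mod_cast hz1
  rw [this, Int.cast_zero] at hz
  linarith

lemma pow_mul_abs_sub_round_lt {m : ℕ} (x : ℝ) (r : ℕ)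
    (h : ∀ t ≤ r + 1, distNearestInt (x * nobleMean m ^ t) < 1 / (m + 2)) :
    nobleMean m ^ r *
      |(x * nobleMean m - round (x * nobleMean m)) - nobleMeanConj m * (x - round x)| < 1 := by
  set ε : ℕ → ℝ := fun t => x * nobleMean m ^ t - round (x * nobleMean m ^ t)
  have hrec : ∀ t, t + 2 ≤ r + 1 → ε (t + 2) = (nobleMean m + nobleMeanConj m) * ε (t + 1) -
      nobleMean m * nobleMeanConj m * ε t := by
    intro t ht
    rw [nobleMean_add_nobleMeanConj, nobleMean_mul_nobleMeanConj]
    have := sub_round_eq_of_distNearestInt_lt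
      (by linear_combination x * nobleMean m ^ t * nobleMean_sq m) (h t (by omega))
      (h (t + 1) (by omega)) (h (t + 2) ht)
    simp only [ε]
    linarith
  have hgeo := sub_mul_eq_pow_mul_of_recurrence hrec r le_rfl
  have hε : ∀ t ≤ r + 1, |ε t| < 1 / (m + 2) := h
  have hδ : (1 : ℝ) / (m + 2) ≤ 1 / 2 := by gcongr; linarith [(m.cast_nonneg : (0 : ℝ) ≤ m)]
  calc _ = |ε (r + 1) - nobleMeanConj m * ε r| := by
        rw [hgeo, abs_mul, abs_of_pos (pow_pos (nobleMean_pos m) r)]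
        simp [ε]
    _ ≤ |ε (r + 1)| + |nobleMeanConj m| * |ε r| := by rw [← abs_mul]; exact abs_sub _ _
    _ ≤ |ε (r + 1)| + 1 * |ε r| := by gcongr; exact abs_nobleMeanConj_le_one m
    _ < 1 / (m + 2) + 1 * (1 / (m + 2)) := by gcongr <;> exact hε _ (by omega)
    _ ≤ 1 := by linarith

theorem stmt_13 (m : ℕ) (hm : 1 ≤ m) (lam : ℝ)
    (hlam : lam = ((m : ℝ) + Real.sqrt ((m : ℝ) ^ 2 + 4)) / 2)
    (k : ℝ)
    (hk1 : ∃ a b : ℚ, k = (a : ℝ) + (b : ℝ) * lam)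
    (hk2 : ¬ ∃ c d : ℤ, k = ((c : ℝ) + (d : ℝ) * lam) / Real.sqrt ((m : ℝ) ^ 2 + 4)) :
    ∃ δ : ℝ, 0 < δ ∧ δ < 1 ∧ ∃ r : ℕ, 0 < r ∧
      ∀ n : ℕ, distNearestInt (k * lam ^ n) < δ →
        ∃ j ∈ Finset.Icc (n + 1) (n + r), δ ≤ distNearestInt (k * lam ^ j) := by
  obtain rfl : lam = nobleMean m := hlam
  obtain ⟨c, hc, hgap⟩ := exists_pos_le_abs_sub_round hm hk1 hk2
  obtain ⟨r, hr⟩ := pow_unbounded_of_one_lt c⁻¹ (one_lt_nobleMean hm)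
  refine ⟨1 / (m + 2), by positivity, by rw [div_lt_one (by positivity)]; linarith,
    r + 1, r.succ_pos, fun n hn => ?_⟩
  by_contra! hclose
  have hwindow : ∀ t ≤ r + 1,
      distNearestInt (k * nobleMean m ^ n * nobleMean m ^ t) < 1 / (m + 2) := by
    intro t ht
    rw [mul_assoc, ← pow_add]
    rcases t.eq_zero_or_pos with rfl | ht₀
    · exact hn
    · exact hclose _ (Finset.mem_Icc.mpr ⟨by omega, by omega⟩)
  have hlt := pow_mul_abs_sub_round_lt _ r hwindow
  have hpow : 1 < nobleMean m ^ r * c := by rwa [inv_lt_iff_one_lt_mul₀ hc] at hr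
  have hge := mul_le_mul_of_nonneg_left (hgap n) (pow_nonneg (nobleMean_pos m).le r)
  linarith
end
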